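/- Let p₀, p₁, p₂, q₀, q₁, q₂ ∈ 2^ω satisfy: p₀ ≰_T ⟨p₁,p₂⟩, p₁ ≰_T ⟨p₀,p₂⟩, q₀ ≰_T q₂, and q₂ ≰_T q₁. Let f, g, h : ⊆ 2^ω → 2^ω be the single-point partial functions mapping p₀ ↦ q₀, p₁ ↦ q₁, and p₂ ↦ q₂, respectively. Then (f ⊞ g) ⊓ h ≰_sW (f ⊓ h) ⊞ (g ⊓ h). -/

import Mathlib

attribute [local instance] Classical.propDecidable

namespace StrongWeihrauch

noncomputable section

/-! ### Cantor space, monotone approximations, and the evaluation map -/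

/-- Cantor space `2^ω`; we identify subsets of `ω` with their characteristic functions. -/
abbrev Cantor : Type := ℕ → Bool

/-- The coded triple `⟨n,s,i⟩`. -/
def tpl (n s i : ℕ) : ℕ := Nat.pair n (Nat.pair s i)

/-- A monotone approximation (Definition 3.1): every element has the form `⟨n,s,i⟩` with
`i < 2`; for each `n` there is at most one pair `(s,i)` with `⟨n,s,i⟩ ∈ a`; and the stages `s`
are strictly increasing in `n`. -/
def MonotoneApprox (a : Cantor) : Prop :=
  (∀ k, a k = true → ∃ n s i, i < 2 ∧ k = tpl n s i) ∧
  (∀ n s t i j, a (tpl n s i) = true → a (tpl n t j) = true → s = t ∧ i = j) ∧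
  (∀ m n s t i j, a (tpl m s i) = true → a (tpl n t j) = true → m < n → s < t)

/-- A total monotone approximation: every `n` gets a value. -/
def TotalMonotoneApprox (a : Cantor) : Prop :=
  MonotoneApprox a ∧ ∀ n, ∃ s i, i < 2 ∧ a (tpl n s i) = true

/-- The value of the evaluation map `e` on a (total) monotone approximation:
`eVal a n = i` iff `⟨n,s,i⟩ ∈ a` for some `s`. -/
def eVal (a : Cantor) : Cantor := fun n => decide (∃ s, a (tpl n s 1) = true)

/-- The evaluation map `e : ⊆ 2^ω → 2^ω`, the partial function whose domain is the set of
total monotone approximations `a`, with `e(a)(n) = i` iff `⟨n,s,i⟩ ∈ a` for some `s`. -/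
def evalMA : Cantor →. Cantor := fun a => ⟨TotalMonotoneApprox a, fun _ => eVal a⟩

/-! ### Turing functionals -/

/-- The oracle information available at stage `s`: the first `s` bits of `p`. -/
def initSeg (p : Cantor) (s : ℕ) : List Bool := (List.range s).map p

/-- A `{0,1}`-valued Turing functional on Cantor space, presented by a computable monotone
finite-prefix approximation: `approx σ n = some b` means that the computation on input `n`
with oracle prefix `σ` has converged, with output `b`. -/
structure TuringFunctional where
  approx : List Bool → ℕ → Option Bool
  computable : Computable₂ approx
  mono : ∀ σ τ n b, σ <+: τ → approx σ n = some b → approx τ n = some b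

namespace TuringFunctional

/-- `Φ^p(n)[s]↓`. -/
def ConvAt (Φ : TuringFunctional) (p : Cantor) (n s : ℕ) : Prop :=
  (Φ.approx (initSeg p s) n).isSome = true

/-- `s` is least such that `Φ^p(n)[s]↓`. -/
def LeastStage (Φ : TuringFunctional) (p : Cantor) (n s : ℕ) : Prop :=
  Φ.ConvAt p n s ∧ ∀ t, t < s → ¬ Φ.ConvAt p n t

/-- Convention 2.1: if `Φ^p(n)[s]↓` then `Φ^p(m)[s]↓` for all `m < n`, and for each `s`
there is at most one `n` for which `s` is least with `Φ^p(n)[s]↓`. -/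
def Convention (Φ : TuringFunctional) : Prop :=
  (∀ (p : Cantor) (s n m : ℕ), m < n → Φ.ConvAt p n s → Φ.ConvAt p m s) ∧
  (∀ (p : Cantor) (s n n' : ℕ), Φ.LeastStage p n s → Φ.LeastStage p n' s → n = n')

/-- The partial function `⊆ 2^ω → 2^ω` computed by `Φ`; it is defined at `p` exactly when
`Φ(p)` is total, in which case its value is the map `n ↦ Φ^p(n)`. -/
def eval (Φ : TuringFunctional) : Cantor →. Cantor :=
  fun p => ⟨∀ n, ∃ s b, Φ.approx (initSeg p s) n = some b,
    fun h n => (h n).choose_spec.choose⟩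

end TuringFunctional

/-- `a_{Φ(p)}`: the set of all `⟨n,s,i⟩` where `s` is least such that `Φ^p(n)[s]↓ = i`. -/
def approxSeq (Φ : TuringFunctional) (p : Cantor) : Cantor := fun k =>
  decide (∃ n s b, k = tpl n s (Bool.toNat b) ∧ Φ.LeastStage p n s ∧
    Φ.approx (initSeg p s) n = some b)

/-- Turing reducibility `q ≤_T p` on Cantor space. -/
def TuringLe (q p : Cantor) : Prop := ∃ Φ : TuringFunctional, Φ.eval p = Part.some q

/-! ### Pairing on Cantor space -/

/-- The effective join `⟨p,q⟩` on Cantor space. -/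
def pairC (p q : Cantor) : Cantor := fun n => if n % 2 = 0 then p (n / 2) else q (n / 2)

def leftC (r : Cantor) : Cantor := fun n => r (2 * n)

def rightC (r : Cantor) : Cantor := fun n => r (2 * n + 1)

/-- The singleton `{i} ⊆ ω` as an element of Cantor space. -/
def natSet (i : ℕ) : Cantor := fun n => decide (n = i)

/-- `⟨i,p⟩`, i.e. `⟨{i},p⟩`. -/
def inC (i : ℕ) (p : Cantor) : Cantor := pairC (natSet i) p

lemma leftC_pairC (p q : Cantor) : leftC (pairC p q) = p := by
  funext n
  have h1 : 2 * n % 2 = 0 := by omega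
  have h2 : 2 * n / 2 = n := by omega
  simp [leftC, pairC, h1, h2]

lemma rightC_pairC (p q : Cantor) : rightC (pairC p q) = q := by
  funext n
  have h1 : (2 * n + 1) % 2 = 1 := by omega
  have h2 : (2 * n + 1) / 2 = n := by omega
  simp [rightC, pairC, h1, h2]

lemma tpl_inj {n s i n' s' i' : ℕ} (h : tpl n s i = tpl n' s' i') :
    n = n' ∧ s = s' ∧ i = i' := by
  unfold tpl at h
  rw [Nat.pair_eq_pair] at h
  rcases h with ⟨h1, h2⟩
  rw [Nat.pair_eq_pair] at h2
  exact ⟨h1, h2.1, h2.2⟩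

lemma toNat_lt_two (b : Bool) : b.toNat < 2 := by cases b <;> decide

/-- Encoding of `q ∈ 2^ω` as a total monotone approximation evaluating to `q`. -/
def maEncode (q : Cantor) : Cantor := fun k => decide (∃ n, k = tpl n n (q n).toNat)

lemma maEncode_mem {q : Cantor} {k : ℕ} :
    maEncode q k = true ↔ ∃ n, k = tpl n n (q n).toNat := by
  simp [maEncode]

lemma maEncode_total (q : Cantor) : TotalMonotoneApprox (maEncode q) := by
  refine ⟨⟨?_, ?_, ?_⟩, ?_⟩
  · intro k hk
    obtain ⟨n, rfl⟩ := maEncode_mem.mp hk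
    exact ⟨n, n, (q n).toNat, toNat_lt_two _, rfl⟩
  · intro n s t i j h1 h2
    obtain ⟨m, hm⟩ := maEncode_mem.mp h1
    obtain ⟨m', hm'⟩ := maEncode_mem.mp h2
    obtain ⟨e1, e2, e3⟩ := tpl_inj hm
    obtain ⟨f1, f2, f3⟩ := tpl_inj hm'
    have hmm' : m = m' := by omega
    refine ⟨by omega, by rw [e3, f3, hmm']⟩
  · intro m n s t i j h1 h2 hmn
    obtain ⟨u, hu⟩ := maEncode_mem.mp h1
    obtain ⟨v, hv⟩ := maEncode_mem.mp h2
    obtain ⟨e1, e2, _⟩ := tpl_inj hu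
    obtain ⟨f1, f2, _⟩ := tpl_inj hv
    omega
  · intro n
    exact ⟨n, (q n).toNat, toNat_lt_two _, maEncode_mem.mpr ⟨n, rfl⟩⟩

lemma eVal_maEncode (q : Cantor) : eVal (maEncode q) = q := by
  funext n
  have hiff : (∃ s, maEncode q (tpl n s 1) = true) ↔ q n = true := by
    constructor
    · rintro ⟨s, hs⟩
      obtain ⟨m, hm⟩ := maEncode_mem.mp hs
      obtain ⟨e1, e2, e3⟩ := tpl_inj hm
      subst e1
      cases hq : q n
      · rw [hq] at e3; simp at e3
      · rfl
    · intro hq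
      refine ⟨n, maEncode_mem.mpr ⟨n, ?_⟩⟩
      rw [hq]
      rfl
  cases hq : q n
  · have hne : ¬ (∃ s, maEncode q (tpl n s 1) = true) := by
      intro h
      have ht := hiff.mp h
      rw [ht] at hq
      exact Bool.noConfusion hq
    simp [eVal, hne]
  · simp [eVal, hiff.mpr hq]

/-- An explicit non-(monotone approximation). -/
def badMA : Cantor := fun k => decide (k = tpl 0 0 0 ∨ k = tpl 0 1 0)

lemma badMA_not : ¬ TotalMonotoneApprox badMA := by
  rintro ⟨⟨-, h2, -⟩, -⟩
  have ha : badMA (tpl 0 0 0) = true := by simp [badMA]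
  have hb : badMA (tpl 0 1 0) = true := by simp [badMA]
  have := (h2 0 0 1 0 0 ha hb).1
  omega

/-! ### Represented spaces -/

/-- A represented space: a set `X` together with a partial surjection `δ : ⊆ 2^ω → X`. -/
structure RepSp : Type 1 where
  X : Type
  δ : Cantor →. X
  surj : ∀ x : X, ∃ p, x ∈ δ p

namespace RepSp

/-- The product representation of `X₀ × X₁`: `δ(⟨p₀,p₁⟩) = (δ₀(p₀), δ₁(p₁))`. -/
def prod (A B : RepSp) : RepSp where
  X := A.X × B.X
  δ := fun r => (A.δ (leftC r)).bind fun x => (B.δ (rightC r)).map fun y => (x, y)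
  surj := by
    rintro ⟨x, y⟩
    obtain ⟨p, hp⟩ := A.surj x
    obtain ⟨q, hq⟩ := B.surj y
    refine ⟨pairC p q, ?_⟩
    simp only [leftC_pairC, rightC_pairC, Part.mem_bind_iff]
    exact ⟨x, hp, Part.mem_map _ hq⟩

/-- The disjoint-union representation of `X₀ ⊔ X₁`: `δ(⟨i,p⟩) = ⟨i, δᵢ(p)⟩`. -/
def sum (A B : RepSp) : RepSp where
  X := A.X ⊕ B.X
  δ := fun r =>
    if leftC r = natSet 0 then (A.δ (rightC r)).map Sum.inl
    else if leftC r = natSet 1 then (B.δ (rightC r)).map Sum.inr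
    else Part.none
  surj := by
    rintro (x | y)
    · obtain ⟨p, hp⟩ := A.surj x
      refine ⟨inC 0 p, ?_⟩
      have e1 : leftC (inC 0 p) = natSet 0 := leftC_pairC _ _
      have e2 : rightC (inC 0 p) = p := rightC_pairC _ _
      simp only [e1, e2, if_pos rfl]
      exact Part.mem_map _ hp
    · obtain ⟨p, hp⟩ := B.surj y
      refine ⟨inC 1 p, ?_⟩
      have e1 : leftC (inC 1 p) = natSet 1 := leftC_pairC _ _
      have e2 : rightC (inC 1 p) = p := rightC_pairC _ _
      have hne : natSet 1 ≠ natSet 0 := by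
        intro h
        have := congrFun h 0
        simp [natSet] at this
      simp only [e1, e2, hne, if_neg, if_pos rfl, ite_false, ite_true]
      exact Part.mem_map _ hp

/-- The completion `Ŷ = Y ∪ {∞_Y}` (with `∞_Y` rendered as `none`), represented by
`δ_Ŷ(p) = δ_Y(e(p))` if `p` is a total monotone approximation with `e(p) ∈ dom(δ_Y)`, and
`δ_Ŷ(p) = ∞_Y` otherwise. -/
def hat (A : RepSp) : RepSp where
  X := Option A.X
  δ := fun p => Part.some (((evalMA p).bind A.δ).toOption)
  surj := by
    intro y
    match y with
    | none =>
        refine ⟨badMA, ?_⟩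
        rw [Part.mem_some_iff]
        have hd : ¬ ((evalMA badMA).bind A.δ).Dom := by
          rintro ⟨h1, -⟩
          exact badMA_not h1
        rw [eq_comm, Part.toOption_eq_none_iff]
        exact hd
    | some x =>
        obtain ⟨p, hp⟩ := A.surj x
        refine ⟨maEncode p, ?_⟩
        rw [Part.mem_some_iff, eq_comm, Part.toOption_eq_some_iff]
        refine Part.mem_bind_iff.mpr ?_
        refine ⟨p, ?_, hp⟩
        exact ⟨maEncode_total p, eVal_maEncode p⟩

end RepSp

/-! ### Partial multifunctions and the Weihrauch reducibilities -/

/-- A partial multifunction `f : ⊆ X ⇉ Y` between represented spaces: `f.f x` is the set of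
solutions of the instance `x`, and the domain of `f` is the set of `x` with `f.f x ≠ ∅`. -/
structure MFn : Type 1 where
  A : RepSp
  B : RepSp
  f : A.X → Set B.X

namespace MFn

/-- The coproduct `f ⊔ g`. -/
def sqcup (f g : MFn) : MFn where
  A := f.A.sum g.A
  B := f.B.sum g.B
  f := Sum.elim (fun x => Sum.inl '' f.f x) (fun y => Sum.inr '' g.f y)

/-- The meet `f ⊓ g`, with `(f ⊓ g)(⟨x,y⟩) = ({0} × f(x)) ∪ ({1} × g(y))` for
`x ∈ dom f`, `y ∈ dom g`. -/
def sqcap (f g : MFn) : MFn where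
  A := f.A.prod g.A
  B := f.B.sum g.B
  f := fun xy =>
    if (f.f xy.1).Nonempty ∧ (g.f xy.2).Nonempty then
      (Sum.inl '' f.f xy.1) ∪ (Sum.inr '' g.f xy.2)
    else ∅

/-- The join `f ⊞ g : ⊆ X₀ ⊔ X₁ ⇉ Ŷ₀ × Ŷ₁`, with `(f ⊞ g)(⟨0,x⟩) = f(x) × Ŷ₁` and
`(f ⊞ g)(⟨1,x⟩) = Ŷ₀ × g(x)`. -/
def boxplus (f g : MFn) : MFn where
  A := f.A.sum g.A
  B := (f.B.hat).prod (g.B.hat)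
  f := Sum.elim
    (fun x => (Option.some '' f.f x) ×ˢ (Set.univ : Set (Option g.B.X)))
    (fun y => (Set.univ : Set (Option f.B.X)) ×ˢ (Option.some '' g.f y))

end MFn

/-- `F ⊢ f`: the partial function `F : ⊆ 2^ω → 2^ω` is a realizer of `f`, i.e.
`δ_Y F(p) ∈ f δ_X(p)` for every `p ∈ dom(f δ_X)`. -/
def Realizes (F : Cantor →. Cantor) (f : MFn) : Prop :=
  ∀ p x, x ∈ f.A.δ p → (f.f x).Nonempty →
    ∃ q ∈ F p, ∃ y ∈ f.B.δ q, y ∈ f.f x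

/-- Composition of partial functions on Cantor space: `pcomp F G = F ∘ G`. -/
def pcomp (F G : Cantor →. Cantor) : Cantor →. Cantor := fun p => (G p).bind F

/-- Strong Weihrauch reducibility: `f ≤_sW g` iff there are Turing functionals `Φ, Ψ` with
`Ψ G Φ ⊢ f` for every `G ⊢ g`. -/
def sWLe (f g : MFn) : Prop :=
  ∃ Φ Ψ : TuringFunctional, ∀ G : Cantor →. Cantor, Realizes G g →
    Realizes (pcomp Ψ.eval (pcomp G Φ.eval)) f

/-- Strong Weihrauch equivalence. -/
def sWEq (f g : MFn) : Prop := sWLe f g ∧ sWLe g f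

/-- Weihrauch reducibility: `f ≤_W g` iff there are Turing functionals `Φ, Ψ` with
`Ψ⟨id, G Φ⟩ ⊢ f` for every `G ⊢ g`. -/
def wLe (f g : MFn) : Prop :=
  ∃ Φ Ψ : TuringFunctional, ∀ G : Cantor →. Cantor, Realizes G g →
    Realizes (fun p => (pcomp G Φ.eval p).bind fun q => Ψ.eval (pairC p q)) f

/-- Weihrauch equivalence. -/
def wEq (f g : MFn) : Prop := wLe f g ∧ wLe g f

/-- Cantor space as a represented space, with the identity representation. -/
def CantorSp : RepSp where
  X := Cantor
  δ := fun p => Part.some p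
  surj := fun p => ⟨p, Part.mem_some_iff.mpr rfl⟩

/-- A partial multifunction on Cantor space, viewed as a multifunction on represented
spaces via the identity representation. -/
def ofCantor (F : Cantor → Set Cantor) : MFn := ⟨CantorSp, CantorSp, F⟩

/-! ### Further definitions used in the statements -/

/-- `c` is an index for the Turing functional `Ψ`. -/
def codesTF (c : Nat.Partrec.Code) (Ψ : TuringFunctional) : Prop :=
  ∀ (σ : List Bool) (n : ℕ),
    c.eval (Nat.pair (Encodable.encode σ) n) = Part.some (Encodable.encode (Ψ.approx σ n))

/-- The multifunction `h` of Lemma 4.4: `h(⟨0,p⟩)` consists of all pairs `⟨a,q⟩` where `a`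
is a total monotone approximation with `e(a) ∈ F(p)`, and `h(⟨1,p⟩)` of all pairs `⟨q,a⟩`
where `a` is a total monotone approximation with `e(a) ∈ G(p)`. -/
def hJoin (F G : Cantor → Set Cantor) : Cantor → Set Cantor := fun r =>
  {z | leftC r = natSet 0 ∧
    ∃ a q, z = pairC a q ∧ TotalMonotoneApprox a ∧ eVal a ∈ F (rightC r)} ∪
  {z | leftC r = natSet 1 ∧
    ∃ q a, z = pairC q a ∧ TotalMonotoneApprox a ∧ eVal a ∈ G (rightC r)}

/-- A single-valued partial function on Cantor space, viewed as a partial multifunction on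
represented spaces (via the identity representation). -/
def pfnToM (F : Cantor →. Cantor) : MFn := ofCantor fun p => {q | q ∈ F p}

/-- The single-point partial function `{p} → {q}`. -/
def singleFn (p q : Cantor) : MFn := ofCantor fun r => if r = p then {q} else ∅

/-- `A` is Medvedev reducible to `B`. -/
def MedvedevLe (A B : Set Cantor) : Prop :=
  ∃ Φ : TuringFunctional, ∀ p ∈ B, ∃ q ∈ Φ.eval p, q ∈ A

/-- The all-zero sequence `0^ω`. -/
def zeroSeq : Cantor := fun _ => false

/-- `d_A : A → {0^ω}`. -/
def dFn (A : Set Cantor) : MFn := ofCantor fun p => if p ∈ A then {zeroSeq} else ∅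

/-- `A ⊔ B ⊆ 2^ω`: all `⟨i,p⟩` with `i < 2` and `p ∈ A` if `i = 0`, `p ∈ B` if `i = 1`. -/
def setSum (A B : Set Cantor) : Set Cantor :=
  {r | ∃ p ∈ A, r = inC 0 p} ∪ {r | ∃ p ∈ B, r = inC 1 p}

/-- `A × B ⊆ 2^ω`: all pairs `⟨p,q⟩` with `p ∈ A` and `q ∈ B`. -/
def setProd (A B : Set Cantor) : Set Cantor := {r | ∃ p ∈ A, ∃ q ∈ B, r = pairC p q}

/-- `p` is a name of an instance of `f`. -/
def domName (f : MFn) (p : Cantor) : Prop := ∃ x ∈ f.A.δ p, (f.f x).Nonempty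

/-- `q` is a name of a solution to the instance of `f` named by `p`. -/
def solName (f : MFn) (p q : Cantor) : Prop :=
  ∃ x ∈ f.A.δ p, ∃ y ∈ f.B.δ q, y ∈ f.f x

/-- Strong computable reducibility `f ≤_sc g`: every name `p` of an instance of `f`
computes a name `p'` of an instance of `g` such that every name of a solution to the
latter computes a name of a solution to the former. -/
def scLe (f g : MFn) : Prop :=
  ∀ p, domName f p → ∃ p', TuringLe p' p ∧ domName g p' ∧
    ∀ q, solName g p' q → ∃ z, TuringLe z q ∧ solName f p z

/-- Strong computable equivalence. -/
def scEq (f g : MFn) : Prop := scLe f g ∧ scLe g f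

/-! Suppose `Φ, Ψ` witness the reduction, and feed them an adversarial realizer of
`(f ⊓ h) ⊞ (g ⊓ h)` defined only on the instances `⟨0, (p₀, p₂)⟩` and `⟨1, (p₁, p₂)⟩`.
As `p₁ ≰_T ⟨p₀, p₂⟩`, `Φ` must send the instance `(⟨0, p₀⟩, p₂)` of `(f ⊞ g) ⊓ h` to the first
one, where the realizer answers with `h`'s solution `q₂` alone. As `q₀ ≰_T q₂`, `Ψ` cannot
extract `f`'s solution from that answer, so it commits to the `h`-side after reading finitely
many bits, say `s`. Symmetrically `Φ` sends `(⟨1, p₁⟩, p₂)` to the second instance, where the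
realizer copies those `s` bits and only then starts a monotone approximation of `g`'s solution
`q₁`. This answer is computable from `q₁`, and `Ψ` again commits to the `h`-side, so
`q₂ ≤_T q₁`: a contradiction. -/

local infix:50 " ≤ᵀ " => TuringLe

/-! ### Turing functionals and Turing reducibility -/

lemma getElem?_initSeg (p : Cantor) (s k : ℕ) :
    (initSeg p s)[k]? = if k < s then some (p k) else none := by
  split_ifs with h <;> simp [initSeg, h]

lemma initSeg_prefix (p : Cantor) {s t : ℕ} (h : s ≤ t) : initSeg p s <+: initSeg p t := by
  rw [List.prefix_iff_getElem?]
  intro i hi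
  have hi' : i < s := by simpa [initSeg] using hi
  simp [← List.getElem?_eq_getElem, getElem?_initSeg, hi', hi'.trans_le h]

lemma initSeg_congr {p q : Cantor} {s : ℕ} (h : ∀ k < s, p k = q k) :
    initSeg p s = initSeg q s :=
  List.map_congr_left fun k hk => h k (List.mem_range.mp hk)

namespace TuringFunctional

variable (Φ : TuringFunctional) {p q : Cantor}

lemma approx_initSeg_mono {s t n : ℕ} {b : Bool} (hst : s ≤ t)
    (h : Φ.approx (initSeg p s) n = some b) : Φ.approx (initSeg p t) n = some b :=
  Φ.mono _ _ _ _ (initSeg_prefix p hst) h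

lemma approx_initSeg_inj {s t n : ℕ} {b c : Bool} (hb : Φ.approx (initSeg p s) n = some b)
    (hc : Φ.approx (initSeg p t) n = some c) : b = c := by
  rcases le_total s t with h | h
  · simpa [Φ.approx_initSeg_mono h hb] using hc
  · simpa [Φ.approx_initSeg_mono h hc] using hb.symm

lemma mem_eval : q ∈ Φ.eval p ↔ ∀ n, ∃ s, Φ.approx (initSeg p s) n = some (q n) := by
  constructor
  · rintro ⟨h, rfl⟩ n
    exact ⟨(h n).choose, (h n).choose_spec.choose_spec⟩
  · intro h
    have dom : ∀ n, ∃ s b, Φ.approx (initSeg p s) n = some b := fun n =>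
      (h n).imp fun s hs => ⟨q n, hs⟩
    refine ⟨dom, funext fun n => ?_⟩
    obtain ⟨s, hs⟩ := h n
    exact Φ.approx_initSeg_inj (dom n).choose_spec.choose_spec hs

lemma exists_stage_forall_lt (h : q ∈ Φ.eval p) (n : ℕ) :
    ∃ S, ∀ i < n, Φ.approx (initSeg p S) i = some (q i) := by
  choose s hs using (Φ.mem_eval.mp h)
  refine ⟨(Finset.range n).sup s, fun i hi => ?_⟩
  exact Φ.approx_initSeg_mono (Finset.le_sup (Finset.mem_range.mpr hi)) (hs i)

end TuringFunctional

lemma TuringLe.of_mem_eval {Φ : TuringFunctional} {p q : Cantor} (h : q ∈ Φ.eval p) :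
    q ≤ᵀ p :=
  ⟨Φ, Part.eq_some_iff.mpr h⟩

lemma TuringLe.exists_mem_eval {p q : Cantor} (h : q ≤ᵀ p) :
    ∃ Φ : TuringFunctional, q ∈ Φ.eval p := by
  obtain ⟨Φ, hΦ⟩ := h
  exact ⟨Φ, hΦ ▸ Part.mem_some q⟩

namespace TuringFunctional

def readBit {g : ℕ → ℕ} {φ : ℕ → Bool → Bool} (hg : Computable g) (hφ : Computable₂ φ) :
    TuringFunctional where
  approx σ n := σ[g n]?.map (φ n)
  computable := Computable.option_map
    (Computable.list_getElem?.comp Computable.fst (hg.comp Computable.snd))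
    (hφ.comp (Computable.snd.comp Computable.fst) Computable.snd)
  mono σ τ n b hστ h := by
    obtain ⟨x, hx, rfl⟩ := Option.map_eq_some_iff.mp h
    obtain ⟨hlt, -⟩ := List.getElem?_eq_some_iff.mp hx
    rw [List.prefix_iff_getElem?.mp hστ _ hlt, ← List.getElem?_eq_getElem, hx]
    rfl

lemma mem_eval_readBit {g : ℕ → ℕ} {φ : ℕ → Bool → Bool} (hg : Computable g)
    (hφ : Computable₂ φ) (p : Cantor) :
    (fun n => φ n (p (g n))) ∈ (readBit hg hφ).eval p :=
  (mem_eval _).mpr fun n => ⟨g n + 1, by simp [readBit, getElem?_initSeg]⟩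

def join (Φ₀ Φ₁ : TuringFunctional) : TuringFunctional where
  approx σ n := bif n % 2 == 0 then Φ₀.approx σ (n / 2) else Φ₁.approx σ (n / 2)
  computable := by
    have half : Computable fun x : List Bool × ℕ => x.2 / 2 :=
      (Primrec.nat_div.comp Primrec.snd (Primrec.const 2)).to_comp
    exact Computable.cond
      (Primrec.beq.comp (Primrec.nat_mod.comp Primrec.snd (Primrec.const 2))
        (Primrec.const 0)).to_comp
      (Φ₀.computable.comp Computable.fst half) (Φ₁.computable.comp Computable.fst half)
  mono σ τ n b hστ h := by
    cases hn : n % 2 == 0 <;> simp only [hn, cond_true, cond_false] at h ⊢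
    · exact Φ₁.mono _ _ _ _ hστ h
    · exact Φ₀.mono _ _ _ _ hστ h

lemma mem_eval_join {Φ₀ Φ₁ : TuringFunctional} {a c r : Cantor} (ha : a ∈ Φ₀.eval r)
    (hc : c ∈ Φ₁.eval r) : pairC a c ∈ (join Φ₀ Φ₁).eval r := by
  rw [mem_eval] at ha hc ⊢
  intro n
  by_cases hn : n % 2 = 0
  · obtain ⟨s, hs⟩ := ha (n / 2)
    exact ⟨s, by simp [join, pairC, hn, hs]⟩
  · obtain ⟨s, hs⟩ := hc (n / 2)
    have hn' : n % 2 = 1 := by omega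
    exact ⟨s, by simp [join, pairC, hn', hs]⟩

def patch (l : List Bool) (Φ : TuringFunctional) : TuringFunctional where
  approx σ n := bif decide (n < l.length) then some (l.getD n false) else Φ.approx σ n
  computable := Computable.cond
    (Primrec.nat_lt.decide.comp Primrec.snd (Primrec.const l.length)).to_comp
    (Primrec.option_some.comp
      ((Primrec.list_getD false).comp (Primrec.const l) Primrec.snd)).to_comp
    Φ.computable
  mono σ τ n b hστ h := by
    cases hn : decide (n < l.length) <;> simp only [hn, cond_true, cond_false] at h ⊢
    · exact Φ.mono _ _ _ _ hστ h
    · exact h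

lemma mem_eval_patch {Φ : TuringFunctional} {p q r : Cantor} (s : ℕ) (hr : r ∈ Φ.eval p)
    (hqr : ∀ k, s ≤ k → q k = r k) : q ∈ (patch (initSeg q s) Φ).eval p := by
  rw [mem_eval] at hr ⊢
  intro n
  by_cases hn : n < s
  · refine ⟨0, ?_⟩
    simp [patch, initSeg, hn, List.getD_eq_getElem?_getD]
  · obtain ⟨t, ht⟩ := hr n
    refine ⟨t, ?_⟩
    simpa [patch, initSeg, hn, hqr n (not_lt.mp hn)] using ht

variable (Θ : TuringFunctional)

/-- The output of `Θ` on the oracle prefix `σ`, read off up to its first divergence and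
truncated to length `k`. -/
def outputPrefix (σ : List Bool) (k : ℕ) : List Bool :=
  Nat.rec [] (fun _ l => Option.casesOn (Θ.approx σ l.length) l fun b => l ++ [b]) k

lemma outputPrefix_succ (σ : List Bool) (k : ℕ) :
    Θ.outputPrefix σ (k + 1) =
      Option.casesOn (Θ.approx σ (Θ.outputPrefix σ k).length) (Θ.outputPrefix σ k)
        fun b => Θ.outputPrefix σ k ++ [b] :=
  rfl

lemma length_outputPrefix_le (σ : List Bool) (k : ℕ) : (Θ.outputPrefix σ k).length ≤ k := by
  induction k with
  | zero => exact le_rfl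
  | succ k ih =>
    rw [outputPrefix_succ]
    cases Θ.approx σ (Θ.outputPrefix σ k).length <;> simp <;> omega

lemma approx_outputPrefix (σ : List Bool) (k : ℕ) :
    ∀ i (hi : i < (Θ.outputPrefix σ k).length),
      Θ.approx σ i = some (Θ.outputPrefix σ k)[i] := by
  induction k with
  | zero => simp [outputPrefix]
  | succ k ih =>
    rw [outputPrefix_succ]
    cases hb : Θ.approx σ (Θ.outputPrefix σ k).length with
    | none => exact ih
    | some b =>
      intro i hi
      simp only [List.length_append, List.length_singleton] at hi
      rcases Nat.lt_or_ge i (Θ.outputPrefix σ k).length with h | h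
      · simpa [List.getElem_append_left h] using ih i h
      · obtain rfl : i = (Θ.outputPrefix σ k).length := by omega
        simpa using hb

lemma min_le_length_outputPrefix {σ : List Bool} {n : ℕ}
    (h : ∀ i < n, (Θ.approx σ i).isSome) (k : ℕ) :
    min n k ≤ (Θ.outputPrefix σ k).length := by
  induction k with
  | zero => simp
  | succ k ih =>
    rw [outputPrefix_succ]
    rcases Nat.lt_or_ge (Θ.outputPrefix σ k).length n with hlt | hge
    · obtain ⟨b, hb⟩ := Option.isSome_iff_exists.mp (h _ hlt)
      rw [hb]
      simp only [List.length_append, List.length_singleton]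
      omega
    · cases Θ.approx σ (Θ.outputPrefix σ k).length <;> simp <;> omega

lemma prefix_of_approx {σ τ l₁ l₂ : List Bool} (hστ : σ <+: τ)
    (h₁ : ∀ i (hi : i < l₁.length), Θ.approx σ i = some l₁[i])
    (h₂ : ∀ i (hi : i < l₂.length), Θ.approx τ i = some l₂[i])
    (hlen : l₁.length ≤ l₂.length) : l₁ <+: l₂ := by
  refine List.prefix_iff_getElem?.mpr fun i hi => ?_
  have hi₂ : i < l₂.length := hi.trans_le hlen
  have := Θ.mono _ _ _ _ hστ (h₁ i hi)
  rw [h₂ i hi₂, Option.some_inj] at this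
  rw [List.getElem?_eq_getElem hi₂, this]

lemma outputPrefix_prefix {σ τ : List Bool} (hστ : σ <+: τ) :
    Θ.outputPrefix σ σ.length <+: Θ.outputPrefix τ τ.length := by
  refine Θ.prefix_of_approx hστ (Θ.approx_outputPrefix σ _) (Θ.approx_outputPrefix τ _) ?_
  have hconv : ∀ i < (Θ.outputPrefix σ σ.length).length, (Θ.approx τ i).isSome := fun i hi => by
    rw [Θ.mono _ _ _ _ hστ (Θ.approx_outputPrefix σ _ i hi)]
    rfl
  have := Θ.min_le_length_outputPrefix hconv τ.length
  have := Θ.length_outputPrefix_le σ σ.length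
  have := hστ.length_le
  omega

lemma initSeg_prefix_outputPrefix {σ : List Bool} {r : Cantor} {n : ℕ}
    (h : ∀ i < n, Θ.approx σ i = some (r i)) (hn : n ≤ σ.length) :
    initSeg r n <+: Θ.outputPrefix σ σ.length := by
  have hlen : n ≤ (Θ.outputPrefix σ σ.length).length := by
    have := Θ.min_le_length_outputPrefix (fun i hi => by rw [h i hi]; rfl) σ.length
    omega
  refine Θ.prefix_of_approx List.prefix_rfl (fun i hi => ?_) (Θ.approx_outputPrefix σ _)
    (by simpa [initSeg] using hlen)
  have hi' : i < n := by simpa [initSeg] using hi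
  simpa [initSeg] using h i hi'

lemma computable_outputPrefix : Computable fun σ => Θ.outputPrefix σ σ.length := by
  have hstep : Computable₂ fun (σ : List Bool) (q : ℕ × List Bool) =>
      Option.casesOn (motive := fun _ => List Bool) (Θ.approx σ q.2.length) q.2
        fun b => q.2 ++ [b] :=
    Computable.option_casesOn
      (Θ.computable.comp Computable.fst
        (Computable.list_length.comp (Computable.snd.comp Computable.snd)))
      (Computable.snd.comp Computable.snd)
      (Computable.list_concat.comp
        (Computable.snd.comp (Computable.snd.comp Computable.fst)) Computable.snd).to₂
  exact Computable.nat_rec Computable.list_length (Computable.const []) hstep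

def comp (Θ₂ Θ₁ : TuringFunctional) : TuringFunctional where
  approx σ n := Θ₂.approx (Θ₁.outputPrefix σ σ.length) n
  computable :=
    Θ₂.computable.comp (Θ₁.computable_outputPrefix.comp Computable.fst) Computable.snd
  mono _ _ _ _ hστ := Θ₂.mono _ _ _ _ (Θ₁.outputPrefix_prefix hστ)

lemma mem_eval_comp {Θ₂ Θ₁ : TuringFunctional} {q r z : Cantor}
    (h₁ : r ∈ Θ₁.eval q) (h₂ : z ∈ Θ₂.eval r) : z ∈ (comp Θ₂ Θ₁).eval q := by
  refine (mem_eval _).mpr fun n => ?_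
  obtain ⟨s, hs⟩ := (mem_eval _).mp h₂ n
  obtain ⟨S, hS⟩ := Θ₁.exists_stage_forall_lt h₁ s
  refine ⟨max S s, Θ₂.mono _ _ _ _ (Θ₁.initSeg_prefix_outputPrefix (fun i hi => ?_) ?_) hs⟩
  · exact Θ₁.approx_initSeg_mono (le_max_left _ _) (hS i hi)
  · simp [initSeg]

end TuringFunctional

namespace TuringLe

lemma of_bitwise {g : ℕ → ℕ} {φ : ℕ → Bool → Bool} (hg : Computable g) (hφ : Computable₂ φ)
    (p : Cantor) : (fun n => φ n (p (g n))) ≤ᵀ p :=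
  of_mem_eval (TuringFunctional.mem_eval_readBit hg hφ p)

lemma refl (p : Cantor) : p ≤ᵀ p :=
  of_bitwise (φ := fun _ b => b) Computable.id Computable.snd p

lemma of_computable {q : Cantor} (hq : Computable q) (p : Cantor) : q ≤ᵀ p :=
  of_bitwise (φ := fun n _ => q n) Computable.id (hq.comp Computable.fst) p

lemma leftC_le (r : Cantor) : leftC r ≤ᵀ r :=
  of_bitwise (φ := fun _ b => b)
    (Primrec.nat_mul.comp (Primrec.const 2) Primrec.id).to_comp Computable.snd r

lemma rightC_le (r : Cantor) : rightC r ≤ᵀ r :=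
  of_bitwise (φ := fun _ b => b)
    (Primrec.succ.comp (Primrec.nat_mul.comp (Primrec.const 2) Primrec.id)).to_comp
    Computable.snd r

lemma pairC_le {a c r : Cantor} (ha : a ≤ᵀ r) (hc : c ≤ᵀ r) : pairC a c ≤ᵀ r := by
  obtain ⟨Φ₀, ha⟩ := ha.exists_mem_eval
  obtain ⟨Φ₁, hc⟩ := hc.exists_mem_eval
  exact of_mem_eval (TuringFunctional.mem_eval_join ha hc)

lemma of_forall_ge_eq {p q r : Cantor} (s : ℕ) (hqr : ∀ k, s ≤ k → q k = r k) (hr : r ≤ᵀ p) :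
    q ≤ᵀ p := by
  obtain ⟨Φ, hr⟩ := hr.exists_mem_eval
  exact of_mem_eval (TuringFunctional.mem_eval_patch s hr hqr)

end TuringLe

lemma natSet_computable (i : ℕ) : Computable (natSet i) :=
  (Primrec.eq.decide.comp Primrec.id (Primrec.const i)).to_comp

lemma TuringLe.inC_le (i : ℕ) (p : Cantor) : inC i p ≤ᵀ p :=
  TuringLe.pairC_le (TuringLe.of_computable (natSet_computable i) p) (TuringLe.refl p)

lemma TuringLe.trans {p q r : Cantor} (hpq : p ≤ᵀ q) (hqr : q ≤ᵀ r) : p ≤ᵀ r := by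
  obtain ⟨Θ₂, h₂⟩ := hpq.exists_mem_eval
  obtain ⟨Θ₁, h₁⟩ := hqr.exists_mem_eval
  exact of_mem_eval (TuringFunctional.mem_eval_comp h₁ h₂)

instance : Trans TuringLe TuringLe TuringLe := ⟨TuringLe.trans⟩

lemma TuringLe.pairC_inC_le (i : ℕ) (p q : Cantor) : pairC (inC i p) q ≤ᵀ pairC p q := by
  have := pairC_le (pairC_le (of_computable (natSet_computable i) _) (leftC_le (pairC p q)))
    (rightC_le (pairC p q))
  rwa [leftC_pairC, rightC_pairC] at this

lemma TuringLe.le_inC_pairC (i : ℕ) (p q : Cantor) : p ≤ᵀ inC i (pairC p q) := by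
  have := (leftC_le _).trans (rightC_le (inC i (pairC p q)))
  rwa [inC, rightC_pairC, leftC_pairC] at this

/-! ### Monotone approximations -/

lemma unpair_tpl (n s i : ℕ) :
    (tpl n s i).unpair.1 = n ∧ (tpl n s i).unpair.2.unpair.2 = i := by
  simp [tpl]

namespace MonotoneApprox

variable {a : Cantor}

lemma eq_tpl_of_unpair (ha : MonotoneApprox a) {k n s i : ℕ} (hk : a k = true)
    (hkn : k.unpair.1 = n) (hn : a (tpl n s i) = true) : k = tpl n s i := by
  obtain ⟨n', s', i', -, rfl⟩ := ha.1 k hk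
  obtain rfl : n' = n := (unpair_tpl n' s' i').1 ▸ hkn
  obtain ⟨rfl, rfl⟩ := ha.2.1 n' s' s i' i hk hn
  rfl

lemma eVal_eq (ha : MonotoneApprox a) {n s i : ℕ} (hi : i < 2) (h : a (tpl n s i) = true) :
    eVal a n = (i == 1) := by
  interval_cases i
  · have : ¬ ∃ t, a (tpl n t 1) = true := fun ⟨t, ht⟩ =>
      absurd (ha.2.1 n t s 1 0 ht h).2 one_ne_zero
    simpa [eVal] using this
  · simpa [eVal] using ⟨s, h⟩

end MonotoneApprox

lemma getD_eq_of_prefix {α : Type*} {σ τ : List α} (h : σ <+: τ) {i : ℕ} (hi : i < σ.length)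
    (d : α) : τ.getD i d = σ.getD i d := by
  simp [List.getD_eq_getElem?_getD, List.prefix_iff_getElem?.mp h i hi,
    List.getElem?_eq_getElem hi]

namespace TuringFunctional

/-- Outputs `i` for the first `⟨n,s,i⟩` enumerated by the oracle prefix. -/
def evalMAApprox (σ : List Bool) (n : ℕ) : Option Bool :=
  ((List.range σ.length).find? fun k => σ.getD k false && k.unpair.1 == n).map
    fun k => k.unpair.2.unpair.2 == 1

def evalMAFunctional : TuringFunctional where
  approx := evalMAApprox
  computable := by
    have hl : Primrec fun x : List Bool × ℕ => List.range x.1.length :=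
      Primrec.list_range.comp (Primrec.list_length.comp Primrec.fst)
    have hp : Primrec₂ fun (x : List Bool × ℕ) (k : ℕ) => x.1.getD k false && k.unpair.1 == x.2 :=
      (Primrec.dom_bool₂ (· && ·)).comp
        ((Primrec.list_getD false).comp (Primrec.fst.comp Primrec.fst) Primrec.snd)
        (Primrec.beq.comp (Primrec.fst.comp (Primrec.unpair.comp Primrec.snd))
          (Primrec.snd.comp Primrec.fst))
    have hfind : Primrec fun x : List Bool × ℕ =>
        (List.range x.1.length).find? fun k => x.1.getD k false && k.unpair.1 == x.2 :=
      (Primrec.list_getElem?.comp hl (Primrec.list_findIdx hl hp)).of_eq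
        fun _ => List.find?_eq_getElem?_findIdx.symm
    exact (Primrec.option_map hfind (Primrec.beq.comp
      (Primrec.snd.comp (Primrec.unpair.comp (Primrec.snd.comp
        (Primrec.unpair.comp Primrec.snd)))) (Primrec.const 1)).to₂).to_comp
  mono σ τ n b hστ h := by
    obtain ⟨k, hk, rfl⟩ := Option.map_eq_some_iff.mp h
    simp only [List.find?_range_eq_some, List.mem_range] at hk
    obtain ⟨hPk, hkσ, hmin⟩ := hk
    refine Option.map_eq_some_iff.mpr ⟨k, ?_, rfl⟩
    simp only [List.find?_range_eq_some, List.mem_range]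
    refine ⟨?_, hkσ.trans_le hστ.length_le, fun j hj => ?_⟩
    · rwa [getD_eq_of_prefix hστ hkσ]
    · rw [getD_eq_of_prefix hστ (hj.trans hkσ)]
      exact hmin j hj

lemma eVal_mem_eval {a : Cantor} (ha : TotalMonotoneApprox a) :
    eVal a ∈ evalMAFunctional.eval a := by
  refine (mem_eval _).mpr fun n => ?_
  obtain ⟨s, i, hi, hn⟩ := ha.2 n
  refine ⟨tpl n s i + 1, Option.map_eq_some_iff.mpr ⟨tpl n s i, ?_, ?_⟩⟩
  · have getD_initSeg : ∀ k < tpl n s i + 1, (initSeg a (tpl n s i + 1)).getD k false = a k :=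
      fun k hk => by simp [List.getD_eq_getElem?_getD, getElem?_initSeg, hk]
    have hlen : (initSeg a (tpl n s i + 1)).length = tpl n s i + 1 := by simp [initSeg]
    rw [hlen, List.find?_range_eq_some]
    refine ⟨?_, List.mem_range.mpr (Nat.lt_succ_self _), fun j hj => ?_⟩
    · rw [getD_initSeg _ (Nat.lt_succ_self _), hn]
      simp [unpair_tpl]
    · rw [getD_initSeg j (by omega)]
      cases hj' : a j
      · rfl
      · have : j.unpair.1 ≠ n := fun hjn => (ha.1.eq_tpl_of_unpair hj' hjn hn ▸ hj).false
        simpa using this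
  · rw [ha.1.eVal_eq hi hn, (unpair_tpl n s i).2]

end TuringFunctional

lemma TuringLe.eVal_le {a : Cantor} (ha : TotalMonotoneApprox a) : eVal a ≤ᵀ a :=
  of_mem_eval (TuringFunctional.eVal_mem_eval ha)

lemma tpl_ge (n s i : ℕ) : s ≤ tpl n s i :=
  (Nat.left_le_pair s i).trans (Nat.right_le_pair n _)

def delayMA (d : ℕ) (t : Cantor) : Cantor := fun k =>
  decide (∃ n, k = tpl n (n + d) (t n).toNat)

section delayMA

variable {d : ℕ} {t : Cantor}

lemma delayMA_eq_true {k : ℕ} : delayMA d t k = true ↔ ∃ n, k = tpl n (n + d) (t n).toNat := by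
  simp [delayMA]

lemma delayMA_tpl (n : ℕ) : delayMA d t (tpl n (n + d) (t n).toNat) = true :=
  delayMA_eq_true.mpr ⟨n, rfl⟩

lemma totalMonotoneApprox_delayMA : TotalMonotoneApprox (delayMA d t) := by
  refine ⟨⟨fun k hk => ?_, fun n s u i j h₁ h₂ => ?_, fun m n s u i j h₁ h₂ hmn => ?_⟩,
    fun n => ⟨_, _, toNat_lt_two _, delayMA_tpl n⟩⟩
  · obtain ⟨n, rfl⟩ := delayMA_eq_true.mp hk
    exact ⟨_, _, _, toNat_lt_two _, rfl⟩
  · obtain ⟨m, hm⟩ := delayMA_eq_true.mp h₁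
    obtain ⟨m', hm'⟩ := delayMA_eq_true.mp h₂
    obtain ⟨rfl, rfl, rfl⟩ := tpl_inj hm
    obtain ⟨rfl, rfl, rfl⟩ := tpl_inj hm'
    exact ⟨rfl, rfl⟩
  · obtain ⟨a, ha⟩ := delayMA_eq_true.mp h₁
    obtain ⟨c, hc⟩ := delayMA_eq_true.mp h₂
    obtain ⟨rfl, rfl, -⟩ := tpl_inj ha
    obtain ⟨rfl, rfl, -⟩ := tpl_inj hc
    omega

lemma eVal_delayMA : eVal (delayMA d t) = t := by
  funext n
  rw [totalMonotoneApprox_delayMA.1.eVal_eq (toNat_lt_two _) (delayMA_tpl n)]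
  cases t n <;> rfl

lemma delayMA_of_lt {k : ℕ} (hk : k < d) : delayMA d t k = false := by
  rw [← Bool.not_eq_true, delayMA_eq_true]
  rintro ⟨n, rfl⟩
  have := tpl_ge n (n + d) (t n).toNat
  omega

lemma delayMA_eq_bitwise (k : ℕ) :
    delayMA d t k = ((k.unpair.2.unpair.1 == k.unpair.1 + d) &&
      (k.unpair.2.unpair.2 == (t k.unpair.1).toNat)) := by
  have hk : k = tpl k.unpair.1 k.unpair.2.unpair.1 k.unpair.2.unpair.2 := by
    simp [tpl, Nat.pair_unpair]
  rw [Bool.eq_iff_iff, delayMA_eq_true]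
  simp only [Bool.and_eq_true, beq_iff_eq]
  constructor
  · rintro ⟨n, rfl⟩
    simp [tpl]
  · rintro ⟨hs, hi⟩
    exact ⟨k.unpair.1, by rw [← hs, ← hi, ← hk]⟩

end delayMA

lemma TuringLe.delayMA_le (d : ℕ) (t : Cantor) : delayMA d t ≤ᵀ t := by
  have hφ : Computable₂ fun (k : ℕ) (b : Bool) =>
      (k.unpair.2.unpair.1 == k.unpair.1 + d) && (k.unpair.2.unpair.2 == b.toNat) := by
    have h₁ : Primrec fun k : ℕ => k.unpair.1 := Primrec.fst.comp Primrec.unpair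
    have h₂ : Primrec fun k : ℕ => k.unpair.2.unpair := Primrec.unpair.comp
      (Primrec.snd.comp Primrec.unpair)
    exact ((Primrec.dom_bool₂ (· && ·)).comp
      (Primrec.beq.comp (Primrec.fst.comp (h₂.comp Primrec.fst))
        (Primrec.nat_add.comp (h₁.comp Primrec.fst) (Primrec.const d)))
      (Primrec.beq.comp (Primrec.snd.comp (h₂.comp Primrec.fst))
        ((Primrec.dom_bool Bool.toNat).comp Primrec.snd))).to_comp
  convert of_bitwise (Primrec.fst.comp Primrec.unpair).to_comp hφ t using 1
  exact funext delayMA_eq_bitwise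
/-! ### Represented spaces and multifunctions -/

lemma pairC_leftC_rightC (r : Cantor) : pairC (leftC r) (rightC r) = r := by
  funext n
  unfold pairC leftC rightC
  split_ifs <;> congr 1 <;> omega

lemma eq_pairC_iff {r p q : Cantor} : r = pairC p q ↔ leftC r = p ∧ rightC r = q := by
  constructor
  · rintro rfl
    exact ⟨leftC_pairC p q, rightC_pairC p q⟩
  · rintro ⟨rfl, rfl⟩
    exact (pairC_leftC_rightC r).symm

lemma natSet_zero_ne_one : natSet 0 ≠ natSet 1 := fun h => by
  simpa [natSet] using congrFun h 0

lemma apply_zero_of_leftC_eq {r : Cantor} {i : ℕ} (h : leftC r = natSet i) :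
    r 0 = decide (0 = i) :=
  congrFun h 0

lemma mem_CantorSp_δ {p q : Cantor} : q ∈ CantorSp.δ p ↔ q = p :=
  Part.mem_some_iff

namespace RepSp

variable {A B : RepSp} {r : Cantor}

lemma mem_prod_δ {x : A.X} {y : B.X} :
    (x, y) ∈ (A.prod B).δ r ↔ x ∈ A.δ (leftC r) ∧ y ∈ B.δ (rightC r) := by
  show (x, y) ∈ (A.δ (leftC r)).bind _ ↔ _
  simp [Part.mem_bind_iff, Part.mem_map_iff]

lemma inl_mem_sum_δ {x : A.X} :
    (Sum.inl x : A.X ⊕ B.X) ∈ (A.sum B).δ r ↔ leftC r = natSet 0 ∧ x ∈ A.δ (rightC r) := by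
  show Sum.inl x ∈ (if leftC r = natSet 0 then (A.δ (rightC r)).map Sum.inl
    else if leftC r = natSet 1 then (B.δ (rightC r)).map Sum.inr else Part.none) ↔ _
  split_ifs <;> simp_all [Part.mem_map_iff]

lemma inr_mem_sum_δ {y : B.X} :
    (Sum.inr y : A.X ⊕ B.X) ∈ (A.sum B).δ r ↔ leftC r = natSet 1 ∧ y ∈ B.δ (rightC r) := by
  show Sum.inr y ∈ (if leftC r = natSet 0 then (A.δ (rightC r)).map Sum.inl
    else if leftC r = natSet 1 then (B.δ (rightC r)).map Sum.inr else Part.none) ↔ _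
  split_ifs <;> simp_all [Part.mem_map_iff, natSet_zero_ne_one]

lemma some_mem_hat_δ {x : A.X} :
    some x ∈ A.hat.δ r ↔ TotalMonotoneApprox r ∧ x ∈ A.δ (eVal r) := by
  show some x ∈ Part.some ((evalMA r).bind A.δ).toOption ↔ _
  rw [Part.mem_some_iff, eq_comm, Part.toOption_eq_some_iff]
  refine Part.mem_bind_iff.trans ?_
  constructor
  · rintro ⟨_, ⟨hr, rfl⟩, hx⟩
    exact ⟨hr, hx⟩
  · rintro ⟨hr, hx⟩
    exact ⟨_, ⟨hr, rfl⟩, hx⟩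

lemma exists_mem_hat_δ (A : RepSp) (r : Cantor) : ∃ z, z ∈ A.hat.δ r :=
  ⟨_, Part.mem_some _⟩

lemma some_mem_hat_δ_delayMA {A : RepSp} {x : A.X} {p : Cantor} (d : ℕ)
    (h : x ∈ A.δ p) : some x ∈ A.hat.δ (delayMA d p) :=
  some_mem_hat_δ.mpr ⟨totalMonotoneApprox_delayMA, eVal_delayMA ▸ h⟩

end RepSp

lemma mem_singleFn_f {p q r y : Cantor} : y ∈ (singleFn p q).f r ↔ r = p ∧ y = q := by
  show y ∈ (if r = p then {q} else ∅ : Set Cantor) ↔ _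
  split_ifs with h <;> simp [h]

lemma singleFn_f_nonempty_iff {p q r : Cantor} : ((singleFn p q).f r).Nonempty ↔ r = p := by
  constructor
  · rintro ⟨y, hy⟩
    exact (mem_singleFn_f.mp hy).1
  · rintro rfl
    exact ⟨q, mem_singleFn_f.mpr ⟨rfl, rfl⟩⟩

namespace MFn

variable {f g : MFn}

lemma inl_mem_sqcap_f {x : f.A.X} {y : g.A.X} {z : f.B.X} :
    (Sum.inl z : f.B.X ⊕ g.B.X) ∈ (f.sqcap g).f (x, y) ↔ z ∈ f.f x ∧ (g.f y).Nonempty := by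
  show Sum.inl z ∈ (if (f.f x).Nonempty ∧ (g.f y).Nonempty then
    (Sum.inl '' f.f x) ∪ (Sum.inr '' g.f y) else ∅) ↔ _
  split_ifs with h
  · simpa using fun hz => h.2
  · simpa using fun hz hy => h ⟨⟨z, hz⟩, hy⟩

lemma inr_mem_sqcap_f {x : f.A.X} {y : g.A.X} {z : g.B.X} :
    (Sum.inr z : f.B.X ⊕ g.B.X) ∈ (f.sqcap g).f (x, y) ↔ (f.f x).Nonempty ∧ z ∈ g.f y := by
  show Sum.inr z ∈ (if (f.f x).Nonempty ∧ (g.f y).Nonempty then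
    (Sum.inl '' f.f x) ∪ (Sum.inr '' g.f y) else ∅) ↔ _
  split_ifs with h
  · simpa using fun _ => h.1
  · simpa using fun hx hz => h ⟨hx, ⟨z, hz⟩⟩

lemma sqcap_f_nonempty_iff {x : f.A.X} {y : g.A.X} :
    ((f.sqcap g).f (x, y)).Nonempty ↔ (f.f x).Nonempty ∧ (g.f y).Nonempty := by
  constructor
  · rintro ⟨z | z, hz⟩
    · exact ⟨⟨z, (inl_mem_sqcap_f.mp hz).1⟩, (inl_mem_sqcap_f.mp hz).2⟩
    · exact ⟨(inr_mem_sqcap_f.mp hz).1, ⟨z, (inr_mem_sqcap_f.mp hz).2⟩⟩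
  · rintro ⟨hx, z, hz⟩
    exact ⟨Sum.inr z, inr_mem_sqcap_f.mpr ⟨hx, hz⟩⟩

lemma mem_boxplus_f_inl {x : f.A.X} {z : Option f.B.X × Option g.B.X} :
    z ∈ (f.boxplus g).f (Sum.inl x) ↔ ∃ a ∈ f.f x, z.1 = some a := by
  show z ∈ (Option.some '' f.f x) ×ˢ (Set.univ : Set (Option g.B.X)) ↔ _
  simp [eq_comm]

lemma mem_boxplus_f_inr {y : g.A.X} {z : Option f.B.X × Option g.B.X} :
    z ∈ (f.boxplus g).f (Sum.inr y) ↔ ∃ b ∈ g.f y, z.2 = some b := by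
  show z ∈ (Set.univ : Set (Option f.B.X)) ×ˢ (Option.some '' g.f y) ↔ _
  simp [eq_comm]

lemma boxplus_f_inl_nonempty_iff {x : f.A.X} :
    ((f.boxplus g).f (Sum.inl x)).Nonempty ↔ (f.f x).Nonempty := by
  constructor
  · rintro ⟨z, hz⟩
    obtain ⟨a, ha, -⟩ := mem_boxplus_f_inl.mp hz
    exact ⟨a, ha⟩
  · rintro ⟨a, ha⟩
    exact ⟨(some a, none), mem_boxplus_f_inl.mpr ⟨a, ha, rfl⟩⟩

lemma boxplus_f_inr_nonempty_iff {y : g.A.X} :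
    ((f.boxplus g).f (Sum.inr y)).Nonempty ↔ (g.f y).Nonempty := by
  constructor
  · rintro ⟨z, hz⟩
    obtain ⟨b, hb, -⟩ := mem_boxplus_f_inr.mp hz
    exact ⟨b, hb⟩
  · rintro ⟨b, hb⟩
    exact ⟨(none, some b), mem_boxplus_f_inr.mpr ⟨b, hb, rfl⟩⟩

end MFn

lemma mem_pcomp {F G : Cantor →. Cantor} {p z : Cantor} :
    z ∈ pcomp F G p ↔ ∃ y ∈ G p, z ∈ F y :=
  Part.mem_bind_iff

/-! ### The adversarial realizer -/

def twoPointFn (n₀ n₁ a₀ a₁ : Cantor) : Cantor →. Cantor := fun r =>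
  if r = n₀ then Part.some a₀ else if r = n₁ then Part.some a₁ else Part.none

lemma mem_twoPointFn {n₀ n₁ a₀ a₁ r u : Cantor} (h : u ∈ twoPointFn n₀ n₁ a₀ a₁ r) :
    (r = n₀ ∧ u = a₀) ∨ (r = n₁ ∧ u = a₁) := by
  unfold twoPointFn at h
  split_ifs at h with h₀ h₁
  · exact .inl ⟨h₀, Part.mem_some_iff.mp h⟩
  · exact .inr ⟨h₁, Part.mem_some_iff.mp h⟩
  · exact absurd h (Part.notMem_none u)

/-- Names the solution `(⟨1, q₂⟩, ∞)` of `(f ⊓ h) ⊞ (g ⊓ h)` at `⟨0, (p₀, p₂)⟩`, which only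
uses `h`. -/
def answer₀ (q₂ : Cantor) : Cantor := pairC (delayMA 0 (inC 1 q₂)) zeroSeq

/-- Names a solution `(∗, ⟨0, q₁⟩)` at `⟨1, (p₁, p₂)⟩` that only uses `g`, while agreeing with
`answer₀ q₂` below `s`; the delay keeps the approximation of `⟨0, q₁⟩` clear of the copied bits. -/
def answer₁ (q₂ q₁ : Cantor) (s : ℕ) : Cantor := fun k =>
  if k < s then answer₀ q₂ k else pairC zeroSeq (delayMA s (inC 0 q₁)) k

section answers

variable (q₂ q₁ : Cantor) (s : ℕ)

lemma answer₀_le : answer₀ q₂ ≤ᵀ q₂ :=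
  TuringLe.pairC_le ((TuringLe.delayMA_le _ _).trans (TuringLe.inC_le 1 q₂))
    (TuringLe.of_computable (Computable.const false) q₂)

lemma answer₁_le : answer₁ q₂ q₁ s ≤ᵀ q₁ :=
  TuringLe.of_forall_ge_eq s (fun _ hk => if_neg (not_lt.mpr hk))
    (TuringLe.pairC_le (TuringLe.of_computable (Computable.const false) q₁)
      ((TuringLe.delayMA_le _ _).trans (TuringLe.inC_le 0 q₁)))

lemma initSeg_answer₁ : initSeg (answer₁ q₂ q₁ s) s = initSeg (answer₀ q₂) s :=
  initSeg_congr fun _ hk => if_pos hk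

lemma some_inr_mem_hat_δ_answer₀ :
    some (Sum.inr q₂) ∈ (CantorSp.sum CantorSp).hat.δ (leftC (answer₀ q₂)) := by
  rw [answer₀, leftC_pairC]
  exact RepSp.some_mem_hat_δ_delayMA 0
    (RepSp.inr_mem_sum_δ.mpr ⟨leftC_pairC _ _, mem_CantorSp_δ.mpr (rightC_pairC _ _).symm⟩)

lemma rightC_answer₁ : rightC (answer₁ q₂ q₁ s) = delayMA s (inC 0 q₁) := by
  funext j
  show answer₁ q₂ q₁ s (2 * j + 1) = _
  by_cases h : 2 * j + 1 < s
  · rw [answer₁, if_pos h, delayMA_of_lt (by omega)]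
    exact congrFun (rightC_pairC _ zeroSeq) j
  · rw [answer₁, if_neg h]
    exact congrFun (rightC_pairC zeroSeq _) j

lemma some_inl_mem_hat_δ_answer₁ :
    some (Sum.inl q₁) ∈ (CantorSp.sum CantorSp).hat.δ (rightC (answer₁ q₂ q₁ s)) := by
  rw [rightC_answer₁]
  exact RepSp.some_mem_hat_δ_delayMA s
    (RepSp.inl_mem_sum_δ.mpr ⟨leftC_pairC _ _, mem_CantorSp_δ.mpr (rightC_pairC _ _).symm⟩)

end answers

section reduction

variable {p₀ p₁ p₂ q₀ q₁ q₂ : Cantor}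

local notation "𝔣" => singleFn p₀ q₀
local notation "𝔤" => singleFn p₁ q₁
local notation "𝔥" => singleFn p₂ q₂

local infixl:65 " ⊞ " => MFn.boxplus
local infixl:70 " ⊓ " => MFn.sqcap

lemma realizes_twoPointFn_answers (s : ℕ) :
    Realizes (twoPointFn (inC 0 (pairC p₀ p₂)) (inC 1 (pairC p₁ p₂))
      (answer₀ q₂) (answer₁ q₂ q₁ s)) ((𝔣 ⊓ 𝔥) ⊞ (𝔤 ⊓ 𝔥)) := by
  intro r x hx hne
  rcases x with ⟨x₁, x₂⟩ | ⟨x₁, x₂⟩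
  · obtain ⟨hl, hx⟩ := RepSp.inl_mem_sum_δ.mp hx
    obtain ⟨hx₁, hx₂⟩ := RepSp.mem_prod_δ.mp hx
    obtain ⟨hf, hh⟩ := MFn.sqcap_f_nonempty_iff.mp (MFn.boxplus_f_inl_nonempty_iff.mp hne)
    have := singleFn_f_nonempty_iff.mp hf
    subst x₁
    have := singleFn_f_nonempty_iff.mp hh
    subst x₂
    have hr : r = inC 0 (pairC p₀ p₂) := eq_pairC_iff.mpr
      ⟨hl, eq_pairC_iff.mpr ⟨(mem_CantorSp_δ.mp hx₁).symm, (mem_CantorSp_δ.mp hx₂).symm⟩⟩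
    obtain ⟨z, hz⟩ := RepSp.exists_mem_hat_δ _ (rightC (answer₀ q₂))
    refine ⟨answer₀ q₂, by simp [twoPointFn, hr], (some (Sum.inr q₂), z),
      RepSp.mem_prod_δ.mpr ⟨some_inr_mem_hat_δ_answer₀ q₂, hz⟩,
      MFn.mem_boxplus_f_inl.mpr ⟨_, MFn.inr_mem_sqcap_f.mpr ⟨hf, ?_⟩, rfl⟩⟩
    exact mem_singleFn_f.mpr ⟨rfl, rfl⟩
  · obtain ⟨hl, hx⟩ := RepSp.inr_mem_sum_δ.mp hx
    obtain ⟨hx₁, hx₂⟩ := RepSp.mem_prod_δ.mp hx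
    obtain ⟨hg, hh⟩ := MFn.sqcap_f_nonempty_iff.mp (MFn.boxplus_f_inr_nonempty_iff.mp hne)
    have := singleFn_f_nonempty_iff.mp hg
    subst x₁
    have := singleFn_f_nonempty_iff.mp hh
    subst x₂
    have hr : r = inC 1 (pairC p₁ p₂) := eq_pairC_iff.mpr
      ⟨hl, eq_pairC_iff.mpr ⟨(mem_CantorSp_δ.mp hx₁).symm, (mem_CantorSp_δ.mp hx₂).symm⟩⟩
    have htag : inC 1 (pairC p₁ p₂) ≠ inC 0 (pairC p₀ p₂) := fun h =>
      natSet_zero_ne_one (by simpa [inC, leftC_pairC] using (congrArg leftC h).symm)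
    obtain ⟨z, hz⟩ := RepSp.exists_mem_hat_δ _ (leftC (answer₁ q₂ q₁ s))
    refine ⟨answer₁ q₂ q₁ s, by simp [twoPointFn, hr, htag], (z, some (Sum.inl q₁)),
      RepSp.mem_prod_δ.mpr ⟨hz, some_inl_mem_hat_δ_answer₁ q₂ q₁ s⟩,
      MFn.mem_boxplus_f_inr.mpr ⟨_, MFn.inl_mem_sqcap_f.mpr ⟨?_, hh⟩, rfl⟩⟩
    exact mem_singleFn_f.mpr ⟨rfl, rfl⟩

lemma mem_boxplus_sqcap_δ_inl :
    ((Sum.inl p₀, p₂) : ((𝔣 ⊞ 𝔤) ⊓ 𝔥).A.X) ∈ ((𝔣 ⊞ 𝔤) ⊓ 𝔥).A.δ (pairC (inC 0 p₀) p₂) := by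
  refine RepSp.mem_prod_δ.mpr
    ⟨RepSp.inl_mem_sum_δ.mpr ⟨?_, mem_CantorSp_δ.mpr ?_⟩, mem_CantorSp_δ.mpr ?_⟩ <;>
    simp [inC, leftC_pairC, rightC_pairC]

lemma mem_boxplus_sqcap_δ_inr :
    ((Sum.inr p₁, p₂) : ((𝔣 ⊞ 𝔤) ⊓ 𝔥).A.X) ∈ ((𝔣 ⊞ 𝔤) ⊓ 𝔥).A.δ (pairC (inC 1 p₁) p₂) := by
  refine RepSp.mem_prod_δ.mpr
    ⟨RepSp.inr_mem_sum_δ.mpr ⟨?_, mem_CantorSp_δ.mpr ?_⟩, mem_CantorSp_δ.mpr ?_⟩ <;>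
    simp [inC, leftC_pairC, rightC_pairC]

lemma boxplus_sqcap_f_inl_nonempty : (((𝔣 ⊞ 𝔤) ⊓ 𝔥).f (Sum.inl p₀, p₂)).Nonempty :=
  MFn.sqcap_f_nonempty_iff.mpr ⟨MFn.boxplus_f_inl_nonempty_iff.mpr
    (singleFn_f_nonempty_iff.mpr rfl), singleFn_f_nonempty_iff.mpr rfl⟩

lemma boxplus_sqcap_f_inr_nonempty : (((𝔣 ⊞ 𝔤) ⊓ 𝔥).f (Sum.inr p₁, p₂)).Nonempty :=
  MFn.sqcap_f_nonempty_iff.mpr ⟨MFn.boxplus_f_inr_nonempty_iff.mpr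
    (singleFn_f_nonempty_iff.mpr rfl), singleFn_f_nonempty_iff.mpr rfl⟩

variable {Φ Ψ : TuringFunctional}

lemma exists_approx_answer₀_eq_false (h₁ : ¬ p₁ ≤ᵀ pairC p₀ p₂) (h₂ : ¬ q₀ ≤ᵀ q₂)
    (hred : ∀ G : Cantor →. Cantor, Realizes G ((𝔣 ⊓ 𝔥) ⊞ (𝔤 ⊓ 𝔥)) →
      Realizes (pcomp Ψ.eval (pcomp G Φ.eval)) ((𝔣 ⊞ 𝔤) ⊓ 𝔥)) :
    ∃ s, Ψ.approx (initSeg (answer₀ q₂) s) 0 = some false := by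
  obtain ⟨w, hw, y, hyw, hy⟩ := hred _ (realizes_twoPointFn_answers 0) _ _
    mem_boxplus_sqcap_δ_inl boxplus_sqcap_f_inl_nonempty
  obtain ⟨u, hu, hwu⟩ := mem_pcomp.mp hw
  obtain ⟨v, hv, huv⟩ := mem_pcomp.mp hu
  obtain rfl : u = answer₀ q₂ := by
    rcases mem_twoPointFn huv with ⟨-, rfl⟩ | ⟨rfl, -⟩
    · rfl
    · exact absurd (calc
        p₁ ≤ᵀ inC 1 (pairC p₁ p₂) := TuringLe.le_inC_pairC 1 p₁ p₂
        _ ≤ᵀ pairC (inC 0 p₀) p₂ := TuringLe.of_mem_eval hv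
        _ ≤ᵀ pairC p₀ p₂ := TuringLe.pairC_inC_le 0 p₀ p₂) h₁
  rcases y with ⟨z₁, z₂⟩ | z
  · obtain ⟨-, hz⟩ := RepSp.inl_mem_sum_δ.mp hyw
    obtain ⟨hz₁, -⟩ := RepSp.mem_prod_δ.mp hz
    obtain ⟨a, ha, rfl⟩ := MFn.mem_boxplus_f_inl.mp (MFn.inl_mem_sqcap_f.mp hy).1
    obtain ⟨-, haq⟩ := mem_singleFn_f.mp ha
    obtain ⟨htot, hq₀⟩ := RepSp.some_mem_hat_δ.mp hz₁
    exact absurd (calc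
      q₀ = eVal (leftC (rightC w)) := haq ▸ mem_CantorSp_δ.mp hq₀
      _ ≤ᵀ leftC (rightC w) := TuringLe.eVal_le htot
      _ ≤ᵀ rightC w := TuringLe.leftC_le _
      _ ≤ᵀ w := TuringLe.rightC_le w
      _ ≤ᵀ answer₀ q₂ := TuringLe.of_mem_eval hwu
      _ ≤ᵀ q₂ := answer₀_le q₂) h₂
  · obtain ⟨hl, -⟩ := RepSp.inr_mem_sum_δ.mp hyw
    obtain ⟨s, hs⟩ := (Ψ.mem_eval.mp hwu) 0
    exact ⟨s, by rw [hs, apply_zero_of_leftC_eq hl]; simp⟩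

lemma approx_answer₀_ne_false (h₀ : ¬ p₀ ≤ᵀ pairC p₁ p₂) (h₃ : ¬ q₂ ≤ᵀ q₁)
    (hred : ∀ G : Cantor →. Cantor, Realizes G ((𝔣 ⊓ 𝔥) ⊞ (𝔤 ⊓ 𝔥)) →
      Realizes (pcomp Ψ.eval (pcomp G Φ.eval)) ((𝔣 ⊞ 𝔤) ⊓ 𝔥)) (s : ℕ) :
    Ψ.approx (initSeg (answer₀ q₂) s) 0 ≠ some false := by
  intro hs
  obtain ⟨w, hw, y, hyw, hy⟩ := hred _ (realizes_twoPointFn_answers s) _ _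
    mem_boxplus_sqcap_δ_inr boxplus_sqcap_f_inr_nonempty
  obtain ⟨u, hu, hwu⟩ := mem_pcomp.mp hw
  obtain ⟨v, hv, huv⟩ := mem_pcomp.mp hu
  obtain rfl : u = answer₁ q₂ q₁ s := by
    rcases mem_twoPointFn huv with ⟨rfl, -⟩ | ⟨-, rfl⟩
    · exact absurd (calc
        p₀ ≤ᵀ inC 0 (pairC p₀ p₂) := TuringLe.le_inC_pairC 0 p₀ p₂
        _ ≤ᵀ pairC (inC 1 p₁) p₂ := TuringLe.of_mem_eval hv
        _ ≤ᵀ pairC p₁ p₂ := TuringLe.pairC_inC_le 1 p₁ p₂) h₀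
    · rfl
  have hw₀ : w 0 = false := by
    obtain ⟨t, ht⟩ := Ψ.mem_eval.mp hwu 0
    rw [← initSeg_answer₁ q₂ q₁ s] at hs
    exact (Ψ.approx_initSeg_inj hs ht).symm
  rcases y with z | z
  · obtain ⟨hl, -⟩ := RepSp.inl_mem_sum_δ.mp hyw
    simp [apply_zero_of_leftC_eq hl] at hw₀
  · obtain ⟨-, hz⟩ := RepSp.inr_mem_sum_δ.mp hyw
    obtain ⟨-, hzq⟩ := mem_singleFn_f.mp (MFn.inr_mem_sqcap_f.mp hy).2
    exact h₃ (calc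
      q₂ = rightC w := hzq ▸ mem_CantorSp_δ.mp hz
      _ ≤ᵀ w := TuringLe.rightC_le w
      _ ≤ᵀ answer₁ q₂ q₁ s := TuringLe.of_mem_eval hwu
      _ ≤ᵀ q₁ := answer₁_le q₂ q₁ s)

end reduction

/-- proof of Theorem 4.5: under the stated Turing independence hypotheses,
for the single-point functions `f : p₀ ↦ q₀`, `g : p₁ ↦ q₁`, `h : p₂ ↦ q₂` one has
`(f ⊞ g) ⊓ h ≰_sW (f ⊓ h) ⊞ (g ⊓ h)`. -/
theorem stmt13 : ∀ p₀ p₁ p₂ q₀ q₁ q₂ : Cantor,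
    ¬ TuringLe p₀ (pairC p₁ p₂) → ¬ TuringLe p₁ (pairC p₀ p₂) →
    ¬ TuringLe q₀ q₂ → ¬ TuringLe q₂ q₁ →
    ¬ sWLe (((singleFn p₀ q₀).boxplus (singleFn p₁ q₁)).sqcap (singleFn p₂ q₂))
        (((singleFn p₀ q₀).sqcap (singleFn p₂ q₂)).boxplus
          ((singleFn p₁ q₁).sqcap (singleFn p₂ q₂))) := by
  rintro p₀ p₁ p₂ q₀ q₁ q₂ h₀ h₁ h₂ h₃ ⟨Φ, Ψ, hred⟩
  obtain ⟨s, hs⟩ := exists_approx_answer₀_eq_false h₁ h₂ hred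
  exact approx_answer₀_ne_false h₀ h₃ hred s hs

end

end StrongWeihrauch
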